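/- Let V(x) = ∏_{i=1}^n |x - x_i|^{p_i} on ℝ² with p_i ≥ 1 and p = ∑ p_i. Then there exists C > 0 such that x · ∇V(x) ≥ (p/2) V(x) - C for all x ∈ ℝ² where V is differentiable. -/

import Mathlib

open Real Finset

noncomputable section

abbrev E2 := EuclideanSpace ℝ (Fin 2)

lemma aux_hasFDerivAt (c : E2) (q : ℝ) (x : E2) (hx : x ≠ c) :
    HasFDerivAt (fun y : E2 => ‖y - c‖ ^ q)
      ((q * ‖x - c‖ ^ (q - 2)) • innerSL ℝ (x - c)) x := by
  have hxc : x - c ≠ 0 := sub_ne_zero.mpr hx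
  have hn : (0:ℝ) < ‖x - c‖ := norm_pos_iff.mpr hxc
  have h2 : HasFDerivAt (fun y : E2 => y - c) (ContinuousLinearMap.id ℝ E2) x :=
    (hasFDerivAt_id x).sub_const _
  have h3 := h2.norm_sq
  have h4 : HasDerivAt (fun t : ℝ => t ^ (q / 2))
      ((q / 2) * (‖x - c‖ ^ 2) ^ (q / 2 - 1)) (‖x - c‖ ^ 2) :=
    Real.hasDerivAt_rpow_const (Or.inl (by positivity))
  have h5 := h4.comp_hasFDerivAt x h3
  have h6 : HasFDerivAt (fun y : E2 => ‖y - c‖ ^ q)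
      (((q / 2) * (‖x - c‖ ^ 2) ^ (q / 2 - 1)) •
        (2 • (innerSL ℝ (x - c)).comp (ContinuousLinearMap.id ℝ E2))) x := by
    refine h5.congr_of_eventuallyEq (Filter.Eventually.of_forall fun y => ?_)
    have : ‖y - c‖ ^ q = ((fun t : ℝ => t ^ (q / 2)) ∘ fun x : E2 => ‖x - c‖ ^ 2) y := by
      simp only [Function.comp_apply]
      rw [← Real.rpow_natCast ‖y - c‖ 2, ← Real.rpow_mul (norm_nonneg _)]
      congr 1
      push_cast
      ring
    exact this
  refine h6.congr_fderiv ?_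
  have hpow : ((‖x - c‖ : ℝ) ^ 2) ^ (q / 2 - 1) = ‖x - c‖ ^ (q - 2) := by
    rw [← Real.rpow_natCast ‖x - c‖ 2, ← Real.rpow_mul (norm_nonneg _)]
    congr 1
    push_cast
    ring
  ext v
  simp only [ContinuousLinearMap.smul_apply, innerSL_apply_apply, ContinuousLinearMap.coe_smul',
    Pi.smul_apply, ContinuousLinearMap.coe_comp', Function.comp_apply,
    ContinuousLinearMap.coe_id', id_eq, smul_eq_mul, hpow]
  ring

theorem stmt_3 (n : ℕ) (p : Fin n → ℝ) (hp : ∀ i, 1 ≤ p i) (xi : Fin n → E2)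
    (V : E2 → ℝ) (hV : ∀ x : E2, V x = ∏ i, ‖x - xi i‖ ^ p i) :
    ∃ C : ℝ, 0 < C ∧ ∀ x : E2, DifferentiableAt ℝ V x →
      ((∑ i, p i) / 2) * V x - C ≤ (inner ℝ x (gradient V x) : ℝ) := by
  classical
  have hp0 : ∀ i, (0:ℝ) ≤ p i := fun i => le_trans zero_le_one (hp i)
  set Ci : Fin n → ℝ := fun i => p i * ‖xi i‖ *
    ((2 * ‖xi i‖) ^ (p i - 1) * ∏ j ∈ univ.erase i, (3 * ‖xi i‖ + ‖xi j‖) ^ (p j)) with hCidef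
  have hCi0 : ∀ i, 0 ≤ Ci i := by
    intro i
    refine mul_nonneg (mul_nonneg (hp0 i) (norm_nonneg _)) (mul_nonneg ?_ ?_)
    · exact Real.rpow_nonneg (by positivity) _
    · exact Finset.prod_nonneg fun j _ => Real.rpow_nonneg (by positivity) _
  have hVnn : ∀ y, 0 ≤ V y := fun y => by
    rw [hV]
    exact Finset.prod_nonneg fun i _ => Real.rpow_nonneg (norm_nonneg _) _
  have hCsum : 0 ≤ ∑ i, Ci i := Finset.sum_nonneg fun i _ => hCi0 i
  refine ⟨1 + ∑ i, Ci i, by linarith, fun x hdiff => ?_⟩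
  by_cases hx0 : V x = 0
  · have hmin : IsLocalMin V x :=
      Filter.Eventually.of_forall fun y => by rw [hx0]; exact hVnn y
    have hf0 : fderiv ℝ V x = 0 := hmin.fderiv_eq_zero
    have hg0 : gradient V x = 0 := by rw [gradient, hf0, map_zero]
    rw [hg0, inner_zero_right, hx0]
    nlinarith [Finset.sum_nonneg (fun i (_ : i ∈ (univ : Finset (Fin n))) => hp0 i)]
  · have hne : ∀ i, x ≠ xi i := by
      intro i h
      apply hx0
      rw [hV]
      refine Finset.prod_eq_zero (mem_univ i) ?_
      rw [h, sub_self, norm_zero]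
      exact Real.zero_rpow (by linarith [hp i])
    have hr : ∀ i, (0:ℝ) < ‖x - xi i‖ :=
      fun i => norm_pos_iff.mpr (sub_ne_zero.mpr (hne i))
    set P : Fin n → ℝ := fun i => ∏ j ∈ univ.erase i, ‖x - xi j‖ ^ p j with hPdef
    have hPnn : ∀ i, 0 ≤ P i :=
      fun i => Finset.prod_nonneg fun j _ => Real.rpow_nonneg (norm_nonneg _) _
    have hVx : ∀ i, V x = ‖x - xi i‖ ^ p i * P i := by
      intro i
      rw [hV, hPdef, ← Finset.mul_prod_erase univ _ (mem_univ i)]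
    -- the derivative
    have hF : HasFDerivAt V
        (∑ i, P i • ((p i * ‖x - xi i‖ ^ (p i - 2)) • innerSL ℝ (x - xi i))) x := by
      have hprod := HasFDerivAt.finset_prod (u := (univ : Finset (Fin n)))
        (g := fun i (y : E2) => ‖y - xi i‖ ^ p i)
        (g' := fun i => (p i * ‖x - xi i‖ ^ (p i - 2)) • innerSL ℝ (x - xi i))
        (fun i _ => aux_hasFDerivAt (xi i) (p i) x (hne i))
      exact hprod.congr_of_eventuallyEq (Filter.Eventually.of_forall fun y => hV y)
    have hgrad : gradient V x = (InnerProductSpace.toDual ℝ E2).symm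
        (∑ i, P i • ((p i * ‖x - xi i‖ ^ (p i - 2)) • innerSL ℝ (x - xi i))) :=
      hF.hasGradientAt.gradient
    rw [hgrad, real_inner_comm, InnerProductSpace.toDual_symm_apply]
    simp only [ContinuousLinearMap.sum_apply, ContinuousLinearMap.smul_apply, innerSL_apply_apply,
      smul_eq_mul]
    have key : ∀ i ∈ (univ : Finset (Fin n)), p i / 2 * V x - Ci i ≤
        P i * (p i * ‖x - xi i‖ ^ (p i - 2) * (inner ℝ (x - xi i) x : ℝ)) := by
      intro i _
      have hri : 0 < ‖x - xi i‖ := hr i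
      have e1 : ‖x - xi i‖ ^ (p i - 2) * ‖x - xi i‖ ^ (2:ℕ) = ‖x - xi i‖ ^ p i := by
        rw [← Real.rpow_natCast ‖x - xi i‖ 2, ← Real.rpow_add hri]
        norm_num
      have e2 : ‖x - xi i‖ ^ (p i - 2) * ‖x - xi i‖ = ‖x - xi i‖ ^ (p i - 1) := by
        rw [← Real.rpow_add_one hri.ne']
        congr 1
        ring
      have e3 : ‖x - xi i‖ ^ (p i - 1) * ‖x - xi i‖ = ‖x - xi i‖ ^ p i := by
        rw [← Real.rpow_add_one hri.ne']
        congr 1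
        ring
      have hip : ‖x - xi i‖ ^ (2:ℕ) - ‖x - xi i‖ * ‖xi i‖ ≤ (inner ℝ (x - xi i) x : ℝ) := by
        have h1 : (inner ℝ (x - xi i) x : ℝ) = ‖x - xi i‖ ^ 2 + (inner ℝ (x - xi i) (xi i) : ℝ) := by
          calc (inner ℝ (x - xi i) x : ℝ) = (inner ℝ (x - xi i) ((x - xi i) + xi i) : ℝ) := by
                rw [sub_add_cancel]
            _ = ‖x - xi i‖ ^ 2 + (inner ℝ (x - xi i) (xi i) : ℝ) := by
                rw [inner_add_right, real_inner_self_eq_norm_sq]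
        have h2 := abs_real_inner_le_norm (x - xi i) (xi i)
        have h3 := neg_abs_le (inner ℝ (x - xi i) (xi i) : ℝ)
        rw [h1]
        linarith
      have hmain : p i * ‖xi i‖ * (‖x - xi i‖ ^ (p i - 1) * P i) ≤ p i / 2 * V x + Ci i := by
        rcases le_or_gt (2 * ‖xi i‖) ‖x - xi i‖ with hc | hc
        · have h1 : ‖xi i‖ * (‖x - xi i‖ ^ (p i - 1) * P i) ≤
              (‖x - xi i‖ / 2) * (‖x - xi i‖ ^ (p i - 1) * P i) :=
            mul_le_mul_of_nonneg_right (by linarith)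
              (mul_nonneg (Real.rpow_nonneg hri.le _) (hPnn i))
          have h2 : (‖x - xi i‖ / 2) * (‖x - xi i‖ ^ (p i - 1) * P i) = V x / 2 := by
            rw [hVx i, ← e3]
            ring
          have h3 : p i * (‖xi i‖ * (‖x - xi i‖ ^ (p i - 1) * P i)) ≤ p i * (V x / 2) := by
            apply mul_le_mul_of_nonneg_left _ (hp0 i)
            rw [← h2]; exact h1
          nlinarith [hCi0 i]
        · have hxb : ‖x‖ ≤ 3 * ‖xi i‖ := by
            have h := norm_sub_norm_le x (xi i)
            linarith
          have h1 : ‖x - xi i‖ ^ (p i - 1) ≤ (2 * ‖xi i‖) ^ (p i - 1) :=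
            Real.rpow_le_rpow hri.le hc.le (by linarith [hp i])
          have h2 : P i ≤ ∏ j ∈ univ.erase i, (3 * ‖xi i‖ + ‖xi j‖) ^ (p j) := by
            refine Finset.prod_le_prod (fun j _ => Real.rpow_nonneg (norm_nonneg _) _)
              (fun j _ => Real.rpow_le_rpow (norm_nonneg _) ?_ (hp0 j))
            calc ‖x - xi j‖ ≤ ‖x‖ + ‖xi j‖ := norm_sub_le _ _
              _ ≤ 3 * ‖xi i‖ + ‖xi j‖ := by linarith
          have h3 : ‖x - xi i‖ ^ (p i - 1) * P i ≤
              (2 * ‖xi i‖) ^ (p i - 1) * ∏ j ∈ univ.erase i, (3 * ‖xi i‖ + ‖xi j‖) ^ (p j) :=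
            mul_le_mul h1 h2 (hPnn i) (Real.rpow_nonneg (by positivity) _)
          have h4 : p i * ‖xi i‖ * (‖x - xi i‖ ^ (p i - 1) * P i) ≤ Ci i := by
            rw [hCidef]
            exact mul_le_mul_of_nonneg_left h3 (mul_nonneg (hp0 i) (norm_nonneg _))
          nlinarith [mul_nonneg (hp0 i) (hVnn x)]
      have expand : p i * V x - p i * ‖xi i‖ * (‖x - xi i‖ ^ (p i - 1) * P i) =
          P i * (p i * ‖x - xi i‖ ^ (p i - 2) * (‖x - xi i‖ ^ (2:ℕ) - ‖x - xi i‖ * ‖xi i‖)) := by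
        rw [hVx i, ← e1, ← e2]
        ring
      have hterm : p i * V x - p i * ‖xi i‖ * (‖x - xi i‖ ^ (p i - 1) * P i) ≤
          P i * (p i * ‖x - xi i‖ ^ (p i - 2) * (inner ℝ (x - xi i) x : ℝ)) := by
        rw [expand]
        refine mul_le_mul_of_nonneg_left ?_ (hPnn i)
        exact mul_le_mul_of_nonneg_left hip (mul_nonneg (hp0 i) (Real.rpow_nonneg hri.le _))
      linarith
    have hsum := Finset.sum_le_sum key
    have hsplit : ∑ i, (p i / 2 * V x - Ci i) = (∑ i, p i) / 2 * V x - ∑ i, Ci i := by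
      rw [Finset.sum_sub_distrib]
      congr 1
      rw [← Finset.sum_mul, ← Finset.sum_div]
    rw [hsplit] at hsum
    linarith
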